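/- arXiv:2501.07503 — 4 statements merged into one kernel-verified Lean document; each statement's English description precedes it below -/
import Mathlib

section
/- In the deamortized reclamation scheme, if each thread has a slab of 6p nodes and performs at least 6 iterations of the reclamation loop per write operation, then every 3p writes a full reclamation phase completes; and if during that phase at most p nodes were protected and at most 2p nodes were installed, then at least 3p nodes are reclaimed during the phase. -/
/-! A node of the slab escapes reclamation only if it is installed or protected, so at most
`2p + p` of the `6p` nodes escape; and a phase of at most `18p = 3p · 6` loop iterations is
completed within `3p` writes of at least `6` iterations each. -/

theorem Finset.card_le_card_sdiff_union_add_card_add_card {α : Type*} [DecidableEq α]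
    (s t u : Finset α) : s.card ≤ (s \ (t ∪ u)).card + t.card + u.card :=
  calc s.card ≤ (s \ (t ∪ u)).card + (t ∪ u).card := Finset.card_le_card_sdiff_add_card
    _ ≤ (s \ (t ∪ u)).card + t.card + u.card := by
      rw [add_assoc]
      exact Nat.add_le_add_left (Finset.card_union_le t u) _

/-- In the deamortized reclamation scheme with slabs of `6*p` nodes and at
least `6` reclamation-loop iterations per write, every `3*p` writes a full reclamation
phase (of at most `6*(3*p)` iterations) completes; and if during that phase at most `p`
nodes were protected and at most `2*p` were installed, at least `3*p` nodes are reclaimed. -/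
theorem deamortized_reclaim {Node : Type*} [DecidableEq Node] (p : ℕ)
    (slab installed protected_ : Finset Node)
    (iterations_per_write phase_length : ℕ)
    (hiter : 6 ≤ iterations_per_write)
    (hphase : phase_length ≤ 6 * (3 * p))
    (hslab : slab.card = 6 * p)
    (hprot : protected_.card ≤ p)
    (hinst : installed.card ≤ 2 * p) :
    phase_length ≤ 3 * p * iterations_per_write ∧
      3 * p ≤ (slab \ (installed ∪ protected_)).card := by
  refine ⟨?_, ?_⟩
  · calc phase_length ≤ 3 * p * 6 := by omega
      _ ≤ 3 * p * iterations_per_write := Nat.mul_le_mul_left _ hiter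
  · have hescape := Finset.card_le_card_sdiff_union_add_card_add_card slab installed protected_
    omega
end

section
/- For a sequence lock protocol where the version counter is a natural number that writers increment from even to odd before modifying the data and from odd to even after, if a reader observes the same even version number before and after reading the data, then no write to the data occurred between the reader's two reads of the version number. -/
theorem seqlock_no_write_between_general (v : ℕ → ℕ) (dataWrite : ℕ → Prop)
    (hmono : Monotone v)
    (hodd : ∀ t, dataWrite t → Odd (v t))
    (t1 t2 : ℕ)
    (heq : v t1 = v t2) (heven : Even (v t1)) :
    ∀ t, t1 ≤ t → t ≤ t2 → ¬ dataWrite t := by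
  intro t ht1 ht2 hwrite
  have hconst : v t = v t1 := hmono.eq_of_ge_of_le heq ht1 ht2
  exact Nat.not_odd_iff_even.mpr (hconst ▸ heven) (hodd t hwrite)

/-- In a sequence-lock protocol the version counter `v` is monotone and is
odd at any time at which a data write occurs (writers increment from even to odd before
writing and back to even after). If a reader reads the same even version at times
`t1 ≤ t2`, then no data-write event occurs between the two reads. -/
theorem seqlock_no_write_between (v : ℕ → ℕ) (dataWrite : ℕ → Prop)
    (hmono : Monotone v)
    (hodd : ∀ t, dataWrite t → Odd (v t))
    (t1 t2 : ℕ) (h12 : t1 ≤ t2)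
    (heq : v t1 = v t2) (heven : Even (v t1)) :
    ∀ t, t1 ≤ t → t ≤ t2 → ¬ dataWrite t :=
  seqlock_no_write_between_general v dataWrite hmono hodd t1 t2 heq heven
end

section
/- In the wait-free writable big atomic, the mark bits on W and Z are mismatched if and only if there is a pending write; consequently, the value of the write buffer W cannot change while a write is pending. -/
/-! While the marks are mismatched no install can fire, so as long as no transfer occurs every
event is `other` and the whole state, in particular `W`, stays frozen. -/

/-- State of the writable big atomic: mark bit of `Z`, mark bit of `W`, and the
write-buffer pointer `W`. -/
structure WBState (α : Type*) where
  mZ : Bool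
  mW : Bool
  W : α

/-- Events of the writable big atomic protocol. -/
inductive WBEvent
  | install
  | transfer
  | other

theorem WBEvent.eq_other_of_ne {ev : WBEvent} (hi : ev ≠ .install) (ht : ev ≠ .transfer) :
    ev = .other := by
  cases ev <;> simp_all

theorem WBState.eq_of_mismatch_of_no_transfer {α : Type*} {s : ℕ → WBState α} {e : ℕ → WBEvent}
    (hinstall : ∀ k, e k = .install → (s k).mZ = (s k).mW)
    (hother : ∀ k, e k = .other → s (k + 1) = s k)
    {i j : ℕ} (hij : i ≤ j) (hmis : (s i).mZ ≠ (s i).mW)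
    (hno : ∀ k, i ≤ k → k < j → e k ≠ .transfer) : s j = s i := by
  induction j, hij using Nat.le_induction with
  | base => rfl
  | succ j hij ih =>
    have hsj : s j = s i := ih fun k hik hkj => hno k hik (hkj.trans j.lt_succ_self)
    have hne : e j ≠ .install := fun h => hmis (hsj ▸ hinstall j h)
    rw [hother j (WBEvent.eq_other_of_ne hne (hno j hij j.lt_succ_self)), hsj]

theorem pending_write_freezes_W_general {α : Type*}
    (s : ℕ → WBState α) (e : ℕ → WBEvent)
    (hinstall : ∀ i, e i = WBEvent.install →
      (s i).mZ = (s i).mW ∧ (s (i + 1)).mW = !(s i).mW ∧ (s (i + 1)).mZ = (s i).mZ)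
    (hother : ∀ i, e i = WBEvent.other → s (i + 1) = s i) :
    ∀ i j, i ≤ j → (s i).mZ ≠ (s i).mW → (s j).W ≠ (s i).W →
      ∃ k, i ≤ k ∧ k < j ∧ e k = WBEvent.transfer := by
  intro i j hij hmis hW
  by_contra! hno
  exact hW (congrArg WBState.W <|
    WBState.eq_of_mismatch_of_no_transfer (fun k hk => (hinstall k hk).1) hother hij hmis hno)

/-- The marks on `W` and `Z` are mismatched exactly while a write is
pending: installing a new value in `W` (the only event that changes `W`) requires
matched marks and flips `mW`; a transfer (the only event that changes `mZ`) requires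
mismatched marks, flips `mZ` and leaves `W` unchanged; other events change nothing.
Consequently, if the marks are mismatched at time `i` and `W` has changed by time `j`,
some transfer event occurred in between. -/
theorem pending_write_freezes_W {α : Type*}
    (s : ℕ → WBState α) (e : ℕ → WBEvent)
    (hinstall : ∀ i, e i = WBEvent.install →
      (s i).mZ = (s i).mW ∧ (s (i + 1)).mW = !(s i).mW ∧ (s (i + 1)).mZ = (s i).mZ)
    (htransfer : ∀ i, e i = WBEvent.transfer →
      (s i).mZ ≠ (s i).mW ∧ (s (i + 1)).mZ = !(s i).mZ ∧
        (s (i + 1)).mW = (s i).mW ∧ (s (i + 1)).W = (s i).W)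
    (hWonly : ∀ i, e i ≠ WBEvent.install → (s (i + 1)).W = (s i).W)
    (hother : ∀ i, e i = WBEvent.other → s (i + 1) = s i) :
    ∀ i j, i ≤ j → (s i).mZ ≠ (s i).mW → (s j).W ≠ (s i).W →
      ∃ k, i ≤ k ∧ k < j ∧ e k = WBEvent.transfer :=
  pending_write_freezes_W_general s e hinstall hother
end

section
/- If store operations never install a value equal to the current value of Z, then it is impossible for two consecutive successful updates to Z to both leave Z.value equal to the same value x; hence if a CAS's compare-exchange on Z fails twice while Z.value is claimed to equal expected throughout, a contradiction arises. -/
theorem value_eq_of_const {α : Type*} {value : ℕ → α} {x : α} {s t : ℕ}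
    (hconst : ∀ u, s ≤ u → u ≤ t → value u = x) {a b : ℕ}
    (ha : a ∈ Set.Icc s t) (hb : b ∈ Set.Icc s t) : value a = value b :=
  (hconst a ha.1 ha.2).trans (hconst b hb.1 hb.2).symm

theorem no_two_updates_preserving_value_general {α : Type*} (value : ℕ → α) (x : α)
    (s t : ℕ)
    (hconst : ∀ u, s ≤ u → u ≤ t → value u = x)
    (u1 u2 : ℕ) (hs1 : s < u1) (h12 : u1 < u2) (h2t : u2 ≤ t)
    (isCas : ℕ → Prop) (installVal : ℕ → α) (checkTime : ℕ → ℕ)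
    (hcas2 : isCas u2 → value u2 ≠ value (u2 - 1))
    (htransfer2 : ¬ isCas u2 →
      value u2 = installVal u2 ∧ u1 ≤ checkTime u2 ∧ checkTime u2 ≤ u2 ∧
        installVal u2 ≠ value (checkTime u2)) :
    False := by
  have hu2 : u2 ∈ Set.Icc s t := ⟨by omega, h2t⟩
  by_cases hcas : isCas u2
  · exact hcas2 hcas (value_eq_of_const hconst hu2 ⟨by omega, by omega⟩)
  · obtain ⟨hinstall, hcheck_ge, hcheck_le, hne⟩ := htransfer2 hcas
    exact hne (hinstall ▸ value_eq_of_const hconst hu2 ⟨by omega, by omega⟩)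

/-- Suppose `Z.value = x` throughout an interval `[s, t]` that contains
two successive successful updates at times `u1 < u2`. Each update is either a
cas-update, which changes `Z.value` (contradicting constancy), or a write-transfer,
which installs a value that the writer checked (at a check time inside the interval and
after the previous update, for the second update) to differ from `Z.value` at the time
of the check. This situation is impossible. -/
theorem no_two_updates_preserving_value {α : Type*} (value : ℕ → α) (x : α)
    (s t : ℕ)
    (hconst : ∀ u, s ≤ u → u ≤ t → value u = x)
    (u1 u2 : ℕ) (hs1 : s < u1) (h12 : u1 < u2) (h2t : u2 ≤ t)
    (isCas : ℕ → Prop) (installVal : ℕ → α) (checkTime : ℕ → ℕ)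
    (hcas1 : isCas u1 → value u1 ≠ value (u1 - 1))
    (hcas2 : isCas u2 → value u2 ≠ value (u2 - 1))
    (htransfer2 : ¬ isCas u2 →
      value u2 = installVal u2 ∧ u1 ≤ checkTime u2 ∧ checkTime u2 ≤ u2 ∧
        installVal u2 ≠ value (checkTime u2)) :
    False :=
  no_two_updates_preserving_value_general value x s t hconst u1 u2 hs1 h12 h2t isCas installVal
    checkTime hcas2 htransfer2
end
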